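/- Let (V, ω) be a real symplectic vector space and let 𝔖(V,ω) be the set of compatible complex structures (J² = −id, J*ω = ω, g_J positive definite). The symplectic group Sp(V,ω) acts on 𝔖(V,ω) by conjugation a·J = aJa⁻¹, and this action is transitive. -/

import Mathlib

/-!
A compatible complex structure `J` turns `(V, ω)` into a Hermitian space: `i` acts as `J` and
`⟪x, y⟫ = ω x (J y) + i ω x y` is a Hermitian inner product with imaginary part `ω`. Hermitian
spaces of equal dimension are isometric, so there are `ℝ`-linear isomorphisms `e, e'` from `V`
to `ℂⁿ` carrying `ω` to `Im ⟪·, ·⟫` and `J`, `J'` to multiplication by `i`; then `e'⁻¹ ∘ e` is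
symplectic and conjugates `J` to `J'`.
-/

open Module Complex

structure LinearKahlerStructure (V : Type*) [AddCommGroup V] [Module ℝ V] where
  ω : V →ₗ[ℝ] V →ₗ[ℝ] ℝ
  J : V →ₗ[ℝ] V
  isAlt : ω.IsAlt
  J_J : ∀ v, J (J v) = -v
  ω_J_J : ∀ x y, ω (J x) (J y) = ω x y
  ω_J_pos : ∀ x, x ≠ 0 → 0 < ω x (J x)

namespace LinearKahlerStructure

variable {V : Type*} [AddCommGroup V] [Module ℝ V] (K : LinearKahlerStructure V)

theorem J_mul_J : K.J * K.J = -1 := LinearMap.ext K.J_J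

theorem ω_J_left (x y : V) : K.ω (K.J x) y = -K.ω x (K.J y) := by
  simpa [K.J_J] using (K.ω_J_J (K.J x) y).symm

theorem ω_J_comm (x y : V) : K.ω x (K.J y) = K.ω y (K.J x) := by
  rw [← K.isAlt.neg (K.J x) y, K.ω_J_left, neg_neg]

/-- `V` as a complex inner product space, with `i` acting as `J`. -/
def Space (_K : LinearKahlerStructure V) : Type _ := V

instance : AddCommGroup K.Space := inferInstanceAs (AddCommGroup V)

instance : Module ℝ K.Space := inferInstanceAs (Module ℝ V)

instance [FiniteDimensional ℝ V] : FiniteDimensional ℝ K.Space :=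
  inferInstanceAs (FiniteDimensional ℝ V)

def toSpace : V ≃ₗ[ℝ] K.Space := LinearEquiv.refl ℝ V

instance : Module ℂ K.Space :=
  Module.compHom V (Complex.lift ⟨K.J, K.J_mul_J⟩ : ℂ →ₐ[ℝ] Module.End ℝ V).toRingHom

theorem toSpace_symm_smul (c : ℂ) (x : K.Space) :
    K.toSpace.symm (c • x) = c.re • K.toSpace.symm x + c.im • K.J (K.toSpace.symm x) := rfl

theorem I_smul_toSpace (x : V) : I • K.toSpace x = K.toSpace (K.J x) :=
  K.toSpace.symm.injective (by simp [toSpace_symm_smul])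

instance : IsScalarTower ℝ ℂ K.Space :=
  ⟨fun r c x => K.toSpace.symm.injective <| by
    simp only [map_smul, toSpace_symm_smul, smul_re, smul_im, smul_add, smul_smul, smul_eq_mul]⟩

noncomputable instance innerCore : InnerProductSpace.Core ℂ K.Space where
  inner x y := ⟨K.ω (K.toSpace.symm x) (K.J (K.toSpace.symm y)),
    K.ω (K.toSpace.symm x) (K.toSpace.symm y)⟩
  conj_inner_symm x y := Complex.ext (K.ω_J_comm _ _) (K.isAlt.neg _ _)
  re_inner_nonneg x := by
    rcases eq_or_ne x 0 with rfl | hx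
    · simp
    · exact (K.ω_J_pos _ (by simpa using hx)).le
  add_left x y z := by apply Complex.ext <;> simp
  smul_left x y c := by apply Complex.ext <;> simp [toSpace_symm_smul, K.ω_J_J, K.ω_J_left]
  definite x hx := by
    by_contra h
    exact (K.ω_J_pos _ (by simpa using h)).ne' (congrArg Complex.re hx)

noncomputable instance : NormedAddCommGroup K.Space := K.innerCore.toNormedAddCommGroup

noncomputable instance : InnerProductSpace ℂ K.Space := .ofCore K.innerCore.toCore

theorem im_inner_toSpace (x y : V) : (inner ℂ (K.toSpace x) (K.toSpace y)).im = K.ω x y := rfl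

instance [FiniteDimensional ℝ V] : FiniteDimensional ℂ K.Space :=
  Module.Finite.of_restrictScalars_finite ℝ ℂ K.Space

theorem finrank_space [FiniteDimensional ℝ V] : finrank ℂ K.Space = finrank ℝ V / 2 := by
  have h := finrank_mul_finrank ℝ ℂ K.Space
  rw [Complex.finrank_real_complex, K.toSpace.finrank_eq.symm] at h
  omega

theorem exists_linearEquiv_euclideanSpace [FiniteDimensional ℝ V] :
    ∃ e : V ≃ₗ[ℝ] EuclideanSpace ℂ (Fin (finrank ℝ V / 2)),
      (∀ x y, K.ω x y = (inner ℂ (e x) (e y)).im) ∧ ∀ x, e (K.J x) = I • e x := by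
  let e : K.Space ≃ₗᵢ[ℂ] EuclideanSpace ℂ (Fin (finrank ℝ V / 2)) :=
    ((stdOrthonormalBasis ℂ K.Space).reindex (finCongr K.finrank_space)).repr
  refine ⟨K.toSpace.trans (e.toLinearEquiv.restrictScalars ℝ), fun x y => ?_, fun x => ?_⟩
  · simp [← K.im_inner_toSpace]
  · simp [← K.I_smul_toSpace]

end LinearKahlerStructure

theorem torelli_stmt2_general {V : Type*} [AddCommGroup V] [Module ℝ V] [FiniteDimensional ℝ V]
    (ω : V →ₗ[ℝ] V →ₗ[ℝ] ℝ)
    (halt : ∀ x, ω x x = 0)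
    (J J' : V →ₗ[ℝ] V)
    (hJ2 : ∀ v, J (J v) = -v) (hJω : ∀ x y, ω (J x) (J y) = ω x y)
    (hJpos : ∀ x, x ≠ 0 → 0 < ω x (J x))
    (hJ'2 : ∀ v, J' (J' v) = -v) (hJ'ω : ∀ x y, ω (J' x) (J' y) = ω x y)
    (hJ'pos : ∀ x, x ≠ 0 → 0 < ω x (J' x)) :
    ∃ a : V ≃ₗ[ℝ] V, (∀ x y, ω (a x) (a y) = ω x y) ∧
      (∀ v, a (J (a.symm v)) = J' v) := by
  obtain ⟨e, he_ω, he_J⟩ :=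
    (⟨ω, J, halt, hJ2, hJω, hJpos⟩ : LinearKahlerStructure V).exists_linearEquiv_euclideanSpace
  obtain ⟨e', he'_ω, he'_J⟩ :=
    (⟨ω, J', halt, hJ'2, hJ'ω, hJ'pos⟩ : LinearKahlerStructure V).exists_linearEquiv_euclideanSpace
  dsimp only at he_ω he_J he'_ω he'_J
  refine ⟨e.trans e'.symm, fun x y => ?_, fun v => e'.injective ?_⟩
  · rw [he'_ω, he_ω x y]
    simp
  · simp [he_J, he'_J]

/-- The symplectic group Sp(V,ω) acts transitively on the space
𝔖(V,ω) of compatible complex structures, via conjugation a·J = aJa⁻¹: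
for any two compatible complex structures J, J' there is a symplectic
automorphism a with a J a⁻¹ = J'. -/
theorem torelli_stmt2 {V : Type*} [AddCommGroup V] [Module ℝ V] [FiniteDimensional ℝ V]
    (ω : V →ₗ[ℝ] V →ₗ[ℝ] ℝ)
    (halt : ∀ x, ω x x = 0)
    (hnondeg : ∀ x, (∀ y, ω x y = 0) → x = 0)
    (J J' : V →ₗ[ℝ] V)
    (hJ2 : ∀ v, J (J v) = -v) (hJω : ∀ x y, ω (J x) (J y) = ω x y)
    (hJpos : ∀ x, x ≠ 0 → 0 < ω x (J x))
    (hJ'2 : ∀ v, J' (J' v) = -v) (hJ'ω : ∀ x y, ω (J' x) (J' y) = ω x y)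
    (hJ'pos : ∀ x, x ≠ 0 → 0 < ω x (J' x)) :
    ∃ a : V ≃ₗ[ℝ] V, (∀ x y, ω (a x) (a y) = ω x y) ∧
      (∀ v, a (J (a.symm v)) = J' v) :=
  torelli_stmt2_general ω halt J J' hJ2 hJω hJpos hJ'2 hJ'ω hJ'pos
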